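/- Let S₁, …, S_m be subspaces of Hermitian operators, each containing the identity, and let n = dim(S₁ ⊗ ⋯ ⊗ S_m). If Q is (S₁;…;S_m)-separable, then (n+1)·‖Q‖·I − Q is also (S₁;…;S_m)-separable. -/

import Mathlib

open Matrix
open scoped ComplexOrder

variable {m : ℕ} {d : Fin m → ℕ}

/-- The elementary tensor product of matrices `P i`, as a matrix on the product space. -/
def prodMat (P : ∀ i, Matrix (Fin (d i)) (Fin (d i)) ℂ) :
    Matrix (∀ i, Fin (d i)) (∀ i, Fin (d i)) ℂ :=
  Matrix.of fun p q => ∏ i, P i (p i) (q i)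

/-- The subspace `S₁ ⊗ ⋯ ⊗ S_m`, i.e. the real span of elementary tensor products of
elements of the subspaces `S i`. -/
noncomputable def tensorSpan (S : ∀ i, Submodule ℝ (Matrix (Fin (d i)) (Fin (d i)) ℂ)) :
    Submodule ℝ (Matrix (∀ i, Fin (d i)) (∀ i, Fin (d i)) ℂ) :=
  Submodule.span ℝ {X | ∃ P : ∀ i, Matrix (Fin (d i)) (Fin (d i)) ℂ,
    (∀ i, P i ∈ S i) ∧ X = prodMat P}

/-- `(S₁;…;S_m)`-separability: a finite sum of elementary tensor products of positive
semidefinite elements of the subspaces `S i`. -/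
def IsSep (S : ∀ i, Submodule ℝ (Matrix (Fin (d i)) (Fin (d i)) ℂ))
    (X : Matrix (∀ i, Fin (d i)) (∀ i, Fin (d i)) ℂ) : Prop :=
  ∃ (k : ℕ) (P : Fin k → ∀ i, Matrix (Fin (d i)) (Fin (d i)) ℂ),
    (∀ j i, P j i ∈ S i ∧ (P j i).PosSemidef) ∧ X = ∑ j, prodMat (P j)

/-- The operator (spectral) norm of a complex matrix. -/
noncomputable def opNorm {n : Type*} [Fintype n] [DecidableEq n] (A : Matrix n n ℂ) : ℝ :=
  ‖Matrix.toEuclideanCLM (𝕜 := ℂ) A‖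

/-- The Frobenius norm of a complex matrix. -/
noncomputable def frobNorm {n : Type*} [Fintype n] (A : Matrix n n ℂ) : ℝ :=
  Real.sqrt (∑ p, ∑ q, ‖A p q‖ ^ 2)

/-!
By Carathéodory's theorem in the `n`-dimensional space `S₁ ⊗ ⋯ ⊗ S_m`, `Q` is a sum of at most
`n + 1` elementary tensors `T = P₁ ⊗ ⋯ ⊗ P_m` with `Pᵢ ∈ Sᵢ` positive semidefinite. If `tᵢ` is
the top eigenvalue of `Pᵢ`, then `tᵢ • 1 - Pᵢ ∈ Sᵢ` is positive semidefinite, so replacing the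
factors of `(∏ tᵢ) • 1 = ⊗ (tᵢ • 1)` by the `Pᵢ` one at a time shows that `(∏ tᵢ) • 1 - T` is
separable; testing `T ≤ Q` on the tensor product of top eigenvectors gives `∏ tᵢ ≤ ‖Q‖`. Hence
each `‖Q‖ • 1 - T` is separable, and the left-over multiple of `1` is a nonnegative one.
-/

section ConicCaratheodory

variable {𝕜 E : Type*} [Field 𝕜] [LinearOrder 𝕜] [IsStrictOrderedRing 𝕜] [AddCommGroup E]
  [Module 𝕜 E]

-- Carathéodory's theorem applied to the barycentre `(1/k) ∑ x j` of the family.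
theorem Submodule.exists_nonneg_combination_eq_sum (W : Submodule 𝕜 E) [FiniteDimensional 𝕜 W]
    {k : ℕ} (x : Fin k → E) (hx : ∀ j, x j ∈ W) :
    ∃ (l : ℕ) (c : Fin l → 𝕜) (y : Fin l → Fin k), l ≤ Module.finrank 𝕜 W + 1 ∧
      (∀ j, 0 ≤ c j) ∧ ∑ j, c j • x (y j) = ∑ j, x j := by
  rcases Nat.eq_zero_or_pos k with rfl | hk
  · exact ⟨0, finZeroElim, finZeroElim, by simp, finZeroElim, by simp⟩
  have hk' : (k : 𝕜) ≠ 0 := by positivity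
  have hmem : (k : 𝕜)⁻¹ • ∑ j, x j ∈ convexHull 𝕜 (Set.range x) := by
    have := Finset.centerMass_mem_convexHull (R := 𝕜) (Finset.univ : Finset (Fin k))
      (w := fun _ => 1) (z := x) (fun _ _ => zero_le_one) (by simpa using hk)
      (fun j _ => Set.mem_range_self j)
    simpa [Finset.centerMass] using this
  obtain ⟨ι, _, z, w, hzx, hz, hw, -, hwz⟩ := eq_pos_convex_span_of_mem_convexHull hmem
  have hspan : vectorSpan 𝕜 (Set.range z) ≤ W := by
    rw [vectorSpan_def, Submodule.span_le]
    rintro _ ⟨_, ⟨a, rfl⟩, _, ⟨b, rfl⟩, rfl⟩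
    obtain ⟨i, hi⟩ := hzx ⟨a, rfl⟩
    obtain ⟨j, hj⟩ := hzx ⟨b, rfl⟩
    exact W.sub_mem (hi ▸ hx i) (hj ▸ hx j)
  choose y hy using fun a => hzx ⟨a, rfl⟩
  let e := Fintype.equivFin ι
  refine ⟨Fintype.card ι, fun j => k * w (e.symm j), fun j => y (e.symm j),
    hz.card_le_finrank_succ.trans (by gcongr; exact Submodule.finrank_mono hspan),
    fun j => by have := hw (e.symm j); positivity, ?_⟩
  calc ∑ j, (k * w (e.symm j)) • x (y (e.symm j)) = ∑ a, (k * w a) • z a := by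
        simp only [hy]; exact e.symm.sum_comp fun a => (k * w a) • z a
    _ = (k : 𝕜) • ((k : 𝕜)⁻¹ • ∑ j, x j) := by simp only [mul_smul, ← Finset.smul_sum, hwz]
    _ = ∑ j, x j := smul_inv_smul₀ hk' _

end ConicCaratheodory

lemma prodMat_apply (P : ∀ i, Matrix (Fin (d i)) (Fin (d i)) ℂ) (p q : ∀ i, Fin (d i)) :
    prodMat P p q = ∏ i, P i (p i) (q i) := rfl

@[simp]
lemma prodMat_one : prodMat (fun i => (1 : Matrix (Fin (d i)) (Fin (d i)) ℂ)) = 1 := by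
  ext p q
  simp [prodMat_apply, Matrix.one_apply, Finset.prod_boole, funext_iff]

lemma prodMat_mul (A B : ∀ i, Matrix (Fin (d i)) (Fin (d i)) ℂ) :
    prodMat A * prodMat B = prodMat (A * B) := by
  ext p q
  simp only [Matrix.mul_apply, prodMat_apply, Pi.mul_apply, Finset.prod_univ_sum,
    Fintype.piFinset_univ, Finset.prod_mul_distrib]

lemma prodMat_conjTranspose (A : ∀ i, Matrix (Fin (d i)) (Fin (d i)) ℂ) :
    (prodMat A)ᴴ = prodMat fun i => (A i)ᴴ := by
  ext p q
  simp only [Matrix.conjTranspose_apply, prodMat_apply, star_prod]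

lemma prodMat_smul (c : Fin m → ℝ) (A : ∀ i, Matrix (Fin (d i)) (Fin (d i)) ℂ) :
    prodMat (fun i => c i • A i) = (∏ i, c i) • prodMat A := by
  ext p q
  simp only [prodMat_apply, Matrix.smul_apply, Complex.real_smul, Finset.prod_mul_distrib,
    Complex.ofReal_prod]

lemma prodMat_update_apply (P : ∀ i, Matrix (Fin (d i)) (Fin (d i)) ℂ)
    (k : Fin m) (X : Matrix (Fin (d k)) (Fin (d k)) ℂ) (p q : ∀ i, Fin (d i)) :
    prodMat (Function.update P k X) p q =
      X (p k) (q k) * ∏ i ∈ Finset.univ.erase k, P i (p i) (q i) := by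
  rw [prodMat_apply, ← Finset.mul_prod_erase _ _ (Finset.mem_univ k), Function.update_self]
  congr 1
  exact Finset.prod_congr rfl fun i hi => by rw [Function.update_of_ne (Finset.ne_of_mem_erase hi)]

lemma prodMat_update_sub (P : ∀ i, Matrix (Fin (d i)) (Fin (d i)) ℂ) (k : Fin m)
    (X Y : Matrix (Fin (d k)) (Fin (d k)) ℂ) :
    prodMat (Function.update P k (X - Y)) =
      prodMat (Function.update P k X) - prodMat (Function.update P k Y) := by
  ext p q
  simp only [Matrix.sub_apply, prodMat_update_apply, sub_mul]

lemma prodMat_update_smul (P : ∀ i, Matrix (Fin (d i)) (Fin (d i)) ℂ) (k : Fin m) (c : ℝ) :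
    prodMat (Function.update P k (c • P k)) = c • prodMat P := by
  ext p q
  rw [prodMat_update_apply, Matrix.smul_apply, Matrix.smul_apply, Complex.real_smul,
    Complex.real_smul, prodMat_apply, ← Finset.mul_prod_erase _ _ (Finset.mem_univ k), mul_assoc]

open scoped MatrixOrder Matrix.Norms.L2Operator in
lemma posSemidef_prodMat {P : ∀ i, Matrix (Fin (d i)) (Fin (d i)) ℂ}
    (hP : ∀ i, (P i).PosSemidef) : (prodMat P).PosSemidef := by
  choose B hB using fun i => CStarAlgebra.nonneg_iff_eq_star_mul_self.mp (hP i).nonneg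
  have : prodMat P = (prodMat B)ᴴ * prodMat B := by
    rw [prodMat_conjTranspose, prodMat_mul]
    exact congrArg _ (funext hB)
  exact this ▸ posSemidef_conjTranspose_mul_self _

def prodVec (v : ∀ i, Fin (d i) → ℂ) : (∀ i, Fin (d i)) → ℂ :=
  fun p => ∏ i, v i (p i)

lemma star_prodVec_dotProduct_prodVec (v u : ∀ i, Fin (d i) → ℂ) :
    star (prodVec v) ⬝ᵥ prodVec u = ∏ i, star (v i) ⬝ᵥ u i := by
  simp only [dotProduct, prodVec, Pi.star_apply, star_prod, ← Finset.prod_mul_distrib,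
    Finset.prod_univ_sum, Fintype.piFinset_univ]

lemma prodMat_mulVec_prodVec (P : ∀ i, Matrix (Fin (d i)) (Fin (d i)) ℂ)
    (v : ∀ i, Fin (d i) → ℂ) : prodMat P *ᵥ prodVec v = prodVec fun i => P i *ᵥ v i := by
  ext p
  simp only [mulVec, dotProduct, prodMat_apply, prodVec, ← Finset.prod_mul_distrib,
    Finset.prod_univ_sum, Fintype.piFinset_univ]

lemma prodVec_smul (c : Fin m → ℂ) (v : ∀ i, Fin (d i) → ℂ) :
    prodVec (fun i => c i • v i) = (∏ i, c i) • prodVec v := by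
  ext p
  simp only [prodVec, Pi.smul_apply, smul_eq_mul, Finset.prod_mul_distrib]

section Spectral

variable {n : Type*} [Fintype n] [DecidableEq n]

open scoped MatrixOrder in
lemma Matrix.IsHermitian.posSemidef_smul_one_sub {A : Matrix n n ℂ} (hA : A.IsHermitian) {t : ℝ}
    (ht : ∀ j, hA.eigenvalues j ≤ t) : (t • 1 - A).PosSemidef := by
  have : A ≤ algebraMap ℝ (Matrix n n ℂ) t := le_algebraMap_of_spectrum_le (by
    rw [hA.spectrum_real_eq_range_eigenvalues]
    rintro _ ⟨j, rfl⟩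
    exact ht j) hA.isSelfAdjoint
  rwa [Matrix.le_iff, Algebra.algebraMap_eq_smul_one] at this

lemma Matrix.IsHermitian.exists_top_eigenvector [Nonempty n] {A : Matrix n n ℂ}
    (hA : A.IsHermitian) : ∃ (t : ℝ) (v : n → ℂ),
      A *ᵥ v = (t : ℂ) • v ∧ star v ⬝ᵥ v = 1 ∧ (t • 1 - A).PosSemidef := by
  obtain ⟨j, -, hj⟩ := Finset.exists_max_image Finset.univ hA.eigenvalues Finset.univ_nonempty
  refine ⟨hA.eigenvalues j, hA.eigenvectorBasis j, hA.mulVec_eigenvectorBasis j, ?_,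
    hA.posSemidef_smul_one_sub fun i => hj i (Finset.mem_univ i)⟩
  rw [dotProduct_comm, ← EuclideanSpace.inner_eq_star_dotProduct, inner_self_eq_norm_sq_to_K,
    hA.eigenvectorBasis.orthonormal.1 j]
  simp

lemma re_star_dotProduct_mulVec_le_opNorm (A : Matrix n n ℂ) {w : n → ℂ}
    (hw : star w ⬝ᵥ w = 1) : (star w ⬝ᵥ (A *ᵥ w)).re ≤ opNorm A := by
  set x : EuclideanSpace ℂ n := WithLp.toLp 2 w
  have hx : ‖x‖ = 1 := by
    have h : ‖x‖ ^ 2 = 1 := by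
      rw [@norm_sq_eq_re_inner ℂ, EuclideanSpace.inner_toLp_toLp, dotProduct_comm, hw]
      simp
    exact (pow_eq_one_iff_of_nonneg (norm_nonneg x) two_ne_zero).mp h
  have hinner : star w ⬝ᵥ (A *ᵥ w) = inner ℂ x (Matrix.toEuclideanCLM (𝕜 := ℂ) A x) := by
    rw [Matrix.toEuclideanCLM_toLp, EuclideanSpace.inner_toLp_toLp, dotProduct_comm]
  calc (star w ⬝ᵥ (A *ᵥ w)).re ≤ ‖x‖ * ‖Matrix.toEuclideanCLM (𝕜 := ℂ) A x‖ := by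
        rw [hinner]; exact re_inner_le_norm (𝕜 := ℂ) _ _
    _ ≤ ‖x‖ * (opNorm A * ‖x‖) := by gcongr; exact (Matrix.toEuclideanCLM (𝕜 := ℂ) A).le_opNorm x
    _ = opNorm A := by rw [hx, one_mul, mul_one]

lemma le_opNorm_of_posSemidef_sub {Q T : Matrix n n ℂ} (hQT : (Q - T).PosSemidef) {c : ℝ}
    {w : n → ℂ} (hw : star w ⬝ᵥ w = 1) (hTw : T *ᵥ w = (c : ℂ) • w) : c ≤ opNorm Q := by
  have hQw : 0 ≤ (star w ⬝ᵥ ((Q - T) *ᵥ w)).re :=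
    (Complex.nonneg_iff.mp (hQT.dotProduct_mulVec_nonneg w)).1
  rw [sub_mulVec, dotProduct_sub, hTw, dotProduct_smul, hw, smul_eq_mul, mul_one, Complex.sub_re,
    Complex.ofReal_re, sub_nonneg] at hQw
  exact hQw.trans (re_star_dotProduct_mulVec_le_opNorm Q hw)

lemma opNorm_nsmul_one [Nonempty n] (k : ℕ) : opNorm (k • (1 : Matrix n n ℂ)) = k := by
  rw [opNorm, map_nsmul, map_one, ← Nat.cast_smul_eq_nsmul ℂ, norm_smul, norm_one, mul_one]
  simp

end Spectral

section IsSep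

variable {S : ∀ i, Submodule ℝ (Matrix (Fin (d i)) (Fin (d i)) ℂ)}

lemma isSep_of_isEmpty [IsEmpty (∀ i, Fin (d i))] (X : Matrix (∀ i, Fin (d i)) (∀ i, Fin (d i)) ℂ) :
    IsSep S X :=
  ⟨0, finZeroElim, finZeroElim, Subsingleton.elim _ _⟩

lemma isSep_zero : IsSep S 0 :=
  ⟨0, finZeroElim, finZeroElim, by simp⟩

lemma isSep_prodMat {P : ∀ i, Matrix (Fin (d i)) (Fin (d i)) ℂ}
    (hP : ∀ i, P i ∈ S i ∧ (P i).PosSemidef) : IsSep S (prodMat P) :=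
  ⟨1, fun _ => P, fun _ => hP, by simp⟩

lemma IsSep.add {X Y : Matrix (∀ i, Fin (d i)) (∀ i, Fin (d i)) ℂ}
    (hX : IsSep S X) (hY : IsSep S Y) : IsSep S (X + Y) := by
  obtain ⟨k, P, hP, rfl⟩ := hX
  obtain ⟨l, P', hP', rfl⟩ := hY
  exact ⟨k + l, Fin.append P P', Fin.addCases (by simpa using hP) (by simpa using hP'),
    by simp [Fin.sum_univ_add]⟩

lemma isSep_sum {ι : Type*} (s : Finset ι) {X : ι → Matrix (∀ i, Fin (d i)) (∀ i, Fin (d i)) ℂ}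
    (hX : ∀ a ∈ s, IsSep S (X a)) : IsSep S (∑ a ∈ s, X a) :=
  Finset.sum_induction X _ (fun _ _ => IsSep.add) isSep_zero hX

lemma exists_prodMat_eq_smul_prodMat (hm : 0 < m) {P : ∀ i, Matrix (Fin (d i)) (Fin (d i)) ℂ}
    (hP : ∀ i, P i ∈ S i ∧ (P i).PosSemidef) {c : ℝ} (hc : 0 ≤ c) :
    ∃ P' : ∀ i, Matrix (Fin (d i)) (Fin (d i)) ℂ,
      (∀ i, P' i ∈ S i ∧ (P' i).PosSemidef) ∧ prodMat P' = c • prodMat P := by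
  let k : Fin m := ⟨0, hm⟩
  refine ⟨Function.update P k (c • P k), ?_, prodMat_update_smul P k c⟩
  rw [Function.forall_update_iff (p := fun i X => X ∈ S i ∧ X.PosSemidef)]
  exact ⟨⟨(S k).smul_mem c (hP k).1, (hP k).2.smul hc⟩, fun i _ => hP i⟩

lemma isSep_smul_one (hm : 0 < m) (hone : ∀ i, (1 : Matrix (Fin (d i)) (Fin (d i)) ℂ) ∈ S i)
    {c : ℝ} (hc : 0 ≤ c) : IsSep S (c • (1 : Matrix (∀ i, Fin (d i)) (∀ i, Fin (d i)) ℂ)) := by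
  obtain ⟨P, hP, hPc⟩ := exists_prodMat_eq_smul_prodMat hm (P := fun _ => 1)
    (fun i => ⟨hone i, PosSemidef.one⟩) hc
  rw [← prodMat_one, ← hPc]
  exact isSep_prodMat hP

-- Telescoping: replace the factors `B i` by `A i` one at a time.
lemma isSep_prodMat_sub_prodMat {A B : ∀ i, Matrix (Fin (d i)) (Fin (d i)) ℂ}
    (hA : ∀ i, A i ∈ S i ∧ (A i).PosSemidef) (hB : ∀ i, B i ∈ S i)
    (hAB : ∀ i, (B i - A i).PosSemidef) : IsSep S (prodMat B - prodMat A) := by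
  classical
  have hB' : ∀ i, B i ∈ S i ∧ (B i).PosSemidef := fun i =>
    ⟨hB i, by simpa using (hA i).2.add (hAB i)⟩
  suffices ∀ s : Finset (Fin m), IsSep S (prodMat B - prodMat (s.piecewise A B)) by
    simpa using this Finset.univ
  intro s
  induction s using Finset.induction_on with
  | empty => simpa using isSep_zero
  | insert a s ha ih =>
    have hfix : Function.update (s.piecewise A B) a (B a) = s.piecewise A B :=
      Function.update_eq_self_iff.mpr (Finset.piecewise_eq_of_notMem _ _ _ ha).symm
    have hstep : prodMat B - prodMat ((insert a s).piecewise A B) =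
        (prodMat B - prodMat (s.piecewise A B)) +
          prodMat (Function.update (s.piecewise A B) a (B a - A a)) := by
      rw [prodMat_update_sub, hfix, Finset.piecewise_insert]
      abel
    rw [hstep]
    refine ih.add (isSep_prodMat ?_)
    rw [Function.forall_update_iff (p := fun i X => X ∈ S i ∧ X.PosSemidef)]
    exact ⟨⟨(S a).sub_mem (hB a) (hA a).1, hAB a⟩, fun i _ =>
      Finset.piecewise_cases s A B (fun X => X ∈ S i ∧ X.PosSemidef) (hA i) (hB' i)⟩

lemma IsSep.exists_card_le_finrank_add_one (hm : 0 < m)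
    {Q : Matrix (∀ i, Fin (d i)) (∀ i, Fin (d i)) ℂ} (hQ : IsSep S Q) :
    ∃ (k : ℕ) (P : Fin k → ∀ i, Matrix (Fin (d i)) (Fin (d i)) ℂ),
      k ≤ Module.finrank ℝ (tensorSpan S) + 1 ∧
      (∀ j i, P j i ∈ S i ∧ (P j i).PosSemidef) ∧ Q = ∑ j, prodMat (P j) := by
  obtain ⟨k, P, hP, rfl⟩ := hQ
  obtain ⟨l, c, y, hl, hc, hsum⟩ := (tensorSpan S).exists_nonneg_combination_eq_sum
    (fun j => prodMat (P j)) fun j => Submodule.subset_span ⟨P j, fun i => (hP j i).1, rfl⟩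
  choose P' hP' hP'c using fun j => exists_prodMat_eq_smul_prodMat hm (hP (y j)) (hc j)
  exact ⟨l, P', hl, hP', by simpa [hP'c] using hsum.symm⟩

lemma isSep_opNorm_smul_one_sub_prodMat (hm : 0 < m) [∀ i, Nonempty (Fin (d i))]
    (hone : ∀ i, (1 : Matrix (Fin (d i)) (Fin (d i)) ℂ) ∈ S i)
    {P : ∀ i, Matrix (Fin (d i)) (Fin (d i)) ℂ} (hP : ∀ i, P i ∈ S i ∧ (P i).PosSemidef)
    {Q : Matrix (∀ i, Fin (d i)) (∀ i, Fin (d i)) ℂ} (hQP : (Q - prodMat P).PosSemidef) :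
    IsSep S (opNorm Q • 1 - prodMat P) := by
  choose t v hv hv1 htP using fun i => (hP i).2.isHermitian.exists_top_eigenvector
  have hle : ∏ i, t i ≤ opNorm Q := by
    refine le_opNorm_of_posSemidef_sub hQP (w := prodVec v) ?_ ?_
    · simp [star_prodVec_dotProduct_prodVec, hv1]
    · simp only [prodMat_mulVec_prodVec, hv, prodVec_smul, Complex.ofReal_prod]
  have hsplit : opNorm Q • (1 : Matrix (∀ i, Fin (d i)) (∀ i, Fin (d i)) ℂ) - prodMat P =
      (opNorm Q - ∏ i, t i) • 1 + (prodMat (fun i => t i • 1) - prodMat P) := by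
    rw [prodMat_smul, prodMat_one]
    module
  rw [hsplit]
  exact (isSep_smul_one hm hone (sub_nonneg.mpr hle)).add
    (isSep_prodMat_sub_prodMat hP (fun i => (S i).smul_mem _ (hone i)) htP)

end IsSep

lemma prodMat_fin_zero {d : Fin 0 → ℕ} (P : ∀ i, Matrix (Fin (d i)) (Fin (d i)) ℂ) :
    prodMat P = 1 := by
  ext p q
  rw [Subsingleton.elim p q]
  simp [prodMat_apply]

lemma isSep_fin_zero_iff {d : Fin 0 → ℕ} {S : ∀ i, Submodule ℝ (Matrix (Fin (d i)) (Fin (d i)) ℂ)}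
    {X : Matrix (∀ i, Fin (d i)) (∀ i, Fin (d i)) ℂ} : IsSep S X ↔ ∃ k : ℕ, X = k • 1 := by
  constructor
  · rintro ⟨k, P, -, rfl⟩
    exact ⟨k, by simp [prodMat_fin_zero]⟩
  · rintro ⟨k, rfl⟩
    exact ⟨k, fun _ => finZeroElim, fun _ => finZeroElim, by simp [prodMat_fin_zero]⟩

theorem smul_one_sub_isSep_general {m : ℕ} {d : Fin m → ℕ}
    (S : ∀ i, Submodule ℝ (Matrix (Fin (d i)) (Fin (d i)) ℂ))
    (hone : ∀ i, (1 : Matrix (Fin (d i)) (Fin (d i)) ℂ) ∈ S i)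
    (Q : Matrix (∀ i, Fin (d i)) (∀ i, Fin (d i)) ℂ) (hQ : IsSep S Q) :
    IsSep S (((Module.finrank ℝ (tensorSpan S) + 1 : ℝ) * opNorm Q) •
      (1 : Matrix (∀ i, Fin (d i)) (∀ i, Fin (d i)) ℂ) - Q) := by
  rcases isEmpty_or_nonempty (∀ i, Fin (d i)) with _ | ⟨⟨p⟩⟩
  · exact isSep_of_isEmpty _
  have : ∀ i, Nonempty (Fin (d i)) := fun i => ⟨p i⟩
  rcases Nat.eq_zero_or_pos m with rfl | hm
  · obtain ⟨k, rfl⟩ := isSep_fin_zero_iff.mp hQ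
    refine isSep_fin_zero_iff.mpr ⟨Module.finrank ℝ (tensorSpan S) * k, ?_⟩
    rw [opNorm_nsmul_one]
    module
  obtain ⟨k, P, hk, hP, hQP⟩ := hQ.exists_card_le_finrank_add_one hm
  have hle : ∀ j, (Q - prodMat (P j)).PosSemidef := fun j => by
    rw [hQP, ← Finset.sum_erase_add _ _ (Finset.mem_univ j), add_sub_cancel_right]
    exact posSemidef_sum _ fun j' _ => posSemidef_prodMat fun i => (hP j' i).2
  set n := Module.finrank ℝ (tensorSpan S)
  have hsplit : ((n + 1 : ℝ) * opNorm Q) • (1 : Matrix (∀ i, Fin (d i)) (∀ i, Fin (d i)) ℂ) - Q =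
      ∑ j, (opNorm Q • 1 - prodMat (P j)) + ((n + 1 - k) * opNorm Q) • 1 := by
    rw [Finset.sum_sub_distrib, ← hQP, Finset.sum_const, Finset.card_univ, Fintype.card_fin]
    module
  have hk' : (k : ℝ) ≤ n + 1 := mod_cast hk
  rw [hsplit]
  exact (isSep_sum _ fun j _ => isSep_opNorm_smul_one_sub_prodMat hm hone (hP j) (hle j)).add
    (isSep_smul_one hm hone (mul_nonneg (sub_nonneg.mpr hk') (norm_nonneg _)))

/-- If `Q` is `(S₁;…;S_m)`-separable then so is `(n+1)·‖Q‖·I − Q`, where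
`n = dim(S₁ ⊗ ⋯ ⊗ S_m)`. -/
theorem smul_one_sub_isSep {m : ℕ} {d : Fin m → ℕ}
    (S : ∀ i, Submodule ℝ (Matrix (Fin (d i)) (Fin (d i)) ℂ))
    (hherm : ∀ i, ∀ A ∈ S i, A.IsHermitian)
    (hone : ∀ i, (1 : Matrix (Fin (d i)) (Fin (d i)) ℂ) ∈ S i)
    (Q : Matrix (∀ i, Fin (d i)) (∀ i, Fin (d i)) ℂ) (hQ : IsSep S Q) :
    IsSep S (((Module.finrank ℝ (tensorSpan S) + 1 : ℝ) * opNorm Q) •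
      (1 : Matrix (∀ i, Fin (d i)) (∀ i, Fin (d i)) ℂ) - Q) :=
  smul_one_sub_isSep_general S hone Q hQ
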